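/- arXiv:2107.03427 — 4 statements merged into one kernel-verified Lean document; each statement's English description precedes it below -/
import Mathlib

section
/- For markets with at least two workers and two firms, the worker-proposing deferred acceptance mechanism is not strategy-proof: there exists a preference profile and a firm f with a misreport such that f is matched under the misreport profile to a worker it strictly prefers (under its true preferences) to its partner under truthful reporting. -/
/- Preferences of a worker: a strict order over firms together with the outside
option ⊥ (`none`), encoded by a rank equivalence (higher rank = more preferred). -/
abbrev WPref (m : ℕ) := Option (Fin m) ≃ Fin (m + 1)
abbrev FPref (n : ℕ) := Option (Fin n) ≃ Fin (n + 1)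

attribute [local instance] Classical.propDecidable

/-- State of the worker-proposing deferred-acceptance algorithm: each worker's
set of remaining (not-yet-rejecting) firms, and each firm's tentative hold. -/
structure DAState (n m : ℕ) where
  rem : Fin n → Finset (Fin m)
  hold : Fin m → Option (Fin n)

/-- The proposal of worker `w`: if unmatched, its most preferred remaining firm. -/
noncomputable def proposal {n m : ℕ} (pw : Fin n → WPref m) (s : DAState n m) (w : Fin n) :
    Option (Fin m) :=
  if ∀ f, s.hold f ≠ some w then (s.rem w).toList.argmax (fun f => pw w (some f)) else none

/-- One round of worker-proposing deferred acceptance: every unmatched worker proposes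
to its best remaining firm, every firm tentatively holds the best acceptable worker among
its current hold and the new proposals, and rejected workers delete the rejecting firm. -/
noncomputable def daStep {n m : ℕ} (pw : Fin n → WPref m) (fp : Fin m → FPref n)
    (s : DAState n m) : DAState n m :=
  let newHold : Fin m → Option (Fin n) := fun f =>
    ((Finset.univ.filter fun w => proposal pw s w = some f ∧ fp f (some w) > fp f none) ∪
      (Finset.univ.filter fun w => s.hold f = some w)).toList.argmax fun w => fp f (some w)
  { rem := fun w => (s.rem w).filter fun f => ¬(proposal pw s w = some f ∧ newHold f ≠ some w)
    hold := newHold }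

/-- Initial state: every worker's list is its set of acceptable firms, no firm holds anyone. -/
noncomputable def daInit {n m : ℕ} (pw : Fin n → WPref m) : DAState n m :=
  { rem := fun w => Finset.univ.filter fun f => pw w (some f) > pw w none
    hold := fun _ => none }

noncomputable def daRun {n m : ℕ} (pw : Fin n → WPref m) (fp : Fin m → FPref n) (k : ℕ) :
    DAState n m :=
  (daStep pw fp)^[k] (daInit pw)

/-- The final state of worker-proposing deferred acceptance. -/
noncomputable def daFinal {n m : ℕ} (pw : Fin n → WPref m) (fp : Fin m → FPref n) :
    DAState n m :=
  daRun pw fp (n * m + 1)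

/-!
The witness is the classical two-by-two market, padded by workers who find no firm acceptable:
worker 0 ranks firm 0 over firm 1, worker 1 ranks firm 1 over firm 0, firm 0 ranks worker 1 over
worker 0 and every other firm ranks worker 0 over worker 1. Under truthful reports each worker's
first proposal is accepted, so firm 0 ends with worker 0. If firm 0 declares worker 0
unacceptable, worker 0 moves on to firm 1 and displaces worker 1, who then proposes to firm 0:
firm 0 ends with worker 1, whom it truly prefers.
-/

theorem DAState.ext {n m : ℕ} {s t : DAState n m} (hrem : s.rem = t.rem)
    (hhold : s.hold = t.hold) : s = t := by
  cases s; cases t; congr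

/- Stated for an arbitrary `DecidableLT` instance, because `proposal` and `daStep` are elaborated
with `Classical.propDecidable` rather than the instance coming from the linear order. -/
theorem List.argmax_eq_some_of_forall_le {α β : Type*} [LinearOrder β] [DecidableLT β]
    {f : α → β} (hf : Function.Injective f) {l : List α} {a : α} (ha : a ∈ l)
    (hmax : ∀ b ∈ l, f b ≤ f a) : l.argmax f = some a := by
  classical
  obtain rfl : ‹DecidableLT β› = LinearOrder.toDecidableLT := Subsingleton.elim _ _
  exact List.argmax_eq_some_iff.mpr
    ⟨ha, hmax, fun b hb hab => by rw [hf (le_antisymm (hmax b hb) hab)]⟩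

section DeferredAcceptance

variable {n m : ℕ} {pw : Fin n → WPref m} {fp : Fin m → FPref n} {s : DAState n m}
  {w : Fin n} {f : Fin m}

theorem proposal_eq_some_of_le (hw : ∀ g, s.hold g ≠ some w) (hf : f ∈ s.rem w)
    (hmax : ∀ g ∈ s.rem w, pw w (some g) ≤ pw w (some f)) : proposal pw s w = some f := by
  rw [proposal, if_pos hw]
  exact List.argmax_eq_some_of_forall_le ((pw w).injective.comp (Option.some_injective _))
    (Finset.mem_toList.mpr hf) fun g hg => hmax g (Finset.mem_toList.mp hg)

theorem proposal_eq_none_of_hold_eq (h : s.hold f = some w) : proposal pw s w = none := by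
  rw [proposal, if_neg (not_forall.mpr ⟨f, not_not.mpr h⟩)]

theorem proposal_eq_none_of_rem_eq_empty (h : s.rem w = ∅) : proposal pw s w = none := by
  unfold proposal
  split_ifs <;> simp [h]

theorem daStep_hold_eq_some {a : Fin n}
    (ha : (proposal pw s a = some f ∧ fp f none < fp f (some a)) ∨ s.hold f = some a)
    (hmax : ∀ b, (proposal pw s b = some f ∧ fp f none < fp f (some b)) ∨
      s.hold f = some b → fp f (some b) ≤ fp f (some a)) :
    (daStep pw fp s).hold f = some a :=
  List.argmax_eq_some_of_forall_le ((fp f).injective.comp (Option.some_injective _))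
    (by simpa using ha) fun b hb => hmax b (by simpa using hb)

theorem daStep_hold_eq_self (h : ∀ w, proposal pw s w = some f → fp f (some w) ≤ fp f none) :
    (daStep pw fp s).hold f = s.hold f := by
  cases hf : s.hold f with
  | none =>
    refine List.argmax_eq_none.mpr (Finset.toList_eq_nil.mpr ?_)
    ext w
    simpa [hf] using fun hw => h w hw
  | some a =>
    refine daStep_hold_eq_some (Or.inr hf) ?_
    rintro b (⟨hb, hacc⟩ | hb)
    · exact absurd (h b hb) (not_le.mpr hacc)
    · rw [Option.some_injective _ (hf.symm.trans hb)]

theorem daStep_rem_eq_self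
    (h : ∀ f, proposal pw s w = some f → (daStep pw fp s).hold f = some w) :
    (daStep pw fp s).rem w = s.rem w :=
  Finset.filter_true_of_mem fun f _ hc => hc.2 (h f hc.1)

theorem daStep_rem_eq_erase (hp : proposal pw s w = some f)
    (hr : (daStep pw fp s).hold f ≠ some w) :
    (daStep pw fp s).rem w = (s.rem w).erase f := by
  ext g
  change g ∈ (s.rem w).filter
    (fun g => ¬(proposal pw s w = some g ∧ (daStep pw fp s).hold g ≠ some w)) ↔ _
  rw [Finset.mem_filter, Finset.mem_erase, hp]
  constructor
  · rintro ⟨hg, hkeep⟩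
    exact ⟨fun hgf => hkeep ⟨congrArg some hgf.symm, hgf ▸ hr⟩, hg⟩
  · rintro ⟨hgf, hg⟩
    exact ⟨hg, fun hc => hgf (Option.some_injective _ hc.1).symm⟩

theorem daStep_eq_self (h : ∀ w, proposal pw s w = none) : daStep pw fp s = s :=
  DAState.ext (funext fun w => daStep_rem_eq_self fun f hf => by simp [h w] at hf)
    (funext fun f => daStep_hold_eq_self fun w hw => by simp [h w] at hw)

theorem daRun_succ (k : ℕ) : daRun pw fp (k + 1) = daStep pw fp (daRun pw fp k) :=
  Function.iterate_succ_apply' _ _ _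

theorem daFinal_eq_of_daStep_eq_self {k : ℕ} (hk : k ≤ n * m + 1) (hs : daRun pw fp k = s)
    (hfix : daStep pw fp s = s) : daFinal pw fp = s := by
  rw [daFinal, daRun, ← Nat.sub_add_cancel hk, Function.iterate_add_apply]
  exact (congrArg _ hs).trans (Function.iterate_fixed hfix _)

end DeferredAcceptance

namespace DATruncation

open Finset Function

section Orders

variable {k : ℕ}

/-- Ranks `none` lowest and smaller indices higher. -/
def indexOrder (k : ℕ) : Option (Fin k) ≃ Fin (k + 1) :=
  (Equiv.optionCongr Fin.revPerm).trans (finSuccEquiv k).symm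

theorem indexOrder_none : indexOrder k none = 0 := by
  simp [indexOrder]

theorem indexOrder_some (i : Fin k) : indexOrder k (some i) = i.rev.succ := by
  simp [indexOrder]

theorem indexOrder_none_lt_some (i : Fin k) : indexOrder k none < indexOrder k (some i) := by
  simp [indexOrder_none, indexOrder_some, Fin.succ_pos]

theorem indexOrder_some_le_some {i j : Fin k} :
    indexOrder k (some i) ≤ indexOrder k (some j) ↔ j ≤ i := by
  simp [indexOrder_some, Fin.succ_le_succ_iff, Fin.rev_le_rev]

theorem indexOrder_some_lt_some {i j : Fin k} :
    indexOrder k (some i) < indexOrder k (some j) ↔ j < i := by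
  simp [indexOrder_some, Fin.succ_lt_succ_iff, Fin.rev_lt_rev]

theorem indexOrder_le_some_zero (a : Option (Fin (k + 1))) :
    indexOrder (k + 1) a ≤ indexOrder (k + 1) (some 0) := by
  simp [indexOrder_some, Fin.le_last]

def swapTopTwo (k : ℕ) : Option (Fin (k + 2)) ≃ Fin (k + 3) :=
  (Equiv.swap (some 0) (some 1)).trans (indexOrder _)

@[simp]
theorem swapTopTwo_none : swapTopTwo k none = 0 := by
  simp [swapTopTwo, Equiv.swap_apply_of_ne_of_ne, indexOrder_none]

theorem swapTopTwo_none_lt_some (i : Fin (k + 2)) :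
    swapTopTwo k none < swapTopTwo k (some i) :=
  swapTopTwo_none (k := k) ▸ Fin.pos_iff_ne_zero.mpr fun h =>
    Option.some_ne_none i ((swapTopTwo k).injective (h.trans swapTopTwo_none.symm))

theorem swapTopTwo_le_some_one (a : Option (Fin (k + 2))) :
    swapTopTwo k a ≤ swapTopTwo k (some 1) := by
  simpa [swapTopTwo] using indexOrder_le_some_zero _

theorem swapTopTwo_some_le_some_zero {i : Fin (k + 2)} (hi : i ≠ 1) :
    swapTopTwo k (some i) ≤ swapTopTwo k (some 0) := by
  rcases eq_or_ne i 0 with rfl | hi0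
  · rfl
  simp only [swapTopTwo, Equiv.trans_apply, Equiv.swap_apply_left]
  rw [Equiv.swap_apply_of_ne_of_ne (by simpa using hi0) (by simpa using hi),
    indexOrder_some_le_some]
  exact Fin.one_le_of_ne_zero hi0

theorem swapTopTwo_some_zero_lt_some_one : swapTopTwo k (some 0) < swapTopTwo k (some 1) := by
  simp only [swapTopTwo, Equiv.trans_apply, Equiv.swap_apply_left, Equiv.swap_apply_right]
  exact indexOrder_some_lt_some.mpr Fin.zero_lt_one

def rejectAll (k : ℕ) : Option (Fin (k + 1)) ≃ Fin (k + 2) :=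
  (Equiv.swap none (some 0)).trans (indexOrder _)

theorem rejectAll_le_none (a : Option (Fin (k + 1))) : rejectAll k a ≤ rejectAll k none := by
  simpa [rejectAll] using indexOrder_le_some_zero _

def truncatedPref (k : ℕ) : Option (Fin (k + 2)) ≃ Fin (k + 3) :=
  (Equiv.swap none (some 0)).trans (swapTopTwo k)

theorem truncatedPref_some_zero_le_none : truncatedPref k (some 0) ≤ truncatedPref k none := by
  simp [truncatedPref]

theorem truncatedPref_none_lt_some_one : truncatedPref k none < truncatedPref k (some 1) := by
  simp only [truncatedPref, Equiv.trans_apply, Equiv.swap_apply_left]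
  rw [Equiv.swap_apply_of_ne_of_ne (Option.some_ne_none 1) (by simp)]
  exact swapTopTwo_some_zero_lt_some_one

end Orders

variable {n m : ℕ}

def workerPrefs (n m : ℕ) : Fin (n + 2) → WPref (m + 2) := fun w =>
  if w = 0 then indexOrder _ else if w = 1 then swapTopTwo m else rejectAll (m + 1)

def firmPrefs (n m : ℕ) : Fin (m + 2) → FPref (n + 2) := fun f =>
  if f = 0 then swapTopTwo n else indexOrder _

@[simp]
theorem workerPrefs_zero : workerPrefs n m 0 = indexOrder _ := by
  simp [workerPrefs]

@[simp]
theorem workerPrefs_one : workerPrefs n m 1 = swapTopTwo m := by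
  simp [workerPrefs]

theorem workerPrefs_of_ne {w : Fin (n + 2)} (h0 : w ≠ 0) (h1 : w ≠ 1) :
    workerPrefs n m w = rejectAll (m + 1) := by
  simp [workerPrefs, h0, h1]

@[simp]
theorem firmPrefs_zero : firmPrefs n m 0 = swapTopTwo n := by
  simp [firmPrefs]

theorem firmPrefs_of_ne_zero {f : Fin (m + 2)} (h : f ≠ 0) : firmPrefs n m f = indexOrder _ := by
  simp [firmPrefs, h]

theorem daInit_rem_eq_univ {w : Fin (n + 2)} (hw : w = 0 ∨ w = 1) :
    (daInit (workerPrefs n m)).rem w = univ := by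
  refine Finset.filter_true_of_mem fun f _ => ?_
  rcases hw with rfl | rfl
  · simpa using indexOrder_none_lt_some f
  · simpa using swapTopTwo_none_lt_some f

theorem daInit_rem_eq_empty {w : Fin (n + 2)} (h0 : w ≠ 0) (h1 : w ≠ 1) :
    (daInit (workerPrefs n m)).rem w = ∅ :=
  Finset.filter_false_of_mem fun f _ => by
    simpa [workerPrefs_of_ne h0 h1] using rejectAll_le_none (some f)

theorem proposal_daInit {w : Fin (n + 2)} {f : Fin (m + 2)} :
    proposal (workerPrefs n m) (daInit (workerPrefs n m)) w = some f ↔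
      w = 0 ∧ f = 0 ∨ w = 1 ∧ f = 1 := by
  have hfree : ∀ w g, (daInit (workerPrefs n m)).hold g ≠ some w := fun _ _ => by simp [daInit]
  rcases eq_or_ne w 0 with rfl | h0
  · rw [proposal_eq_some_of_le (f := 0) (hfree 0) (by simp [daInit_rem_eq_univ]) fun g _ => by
      simpa using indexOrder_le_some_zero (some g)]
    simp [eq_comm]
  rcases eq_or_ne w 1 with rfl | h1
  · rw [proposal_eq_some_of_le (f := 1) (hfree 1) (by simp [daInit_rem_eq_univ]) fun g _ => by
      simpa using swapTopTwo_le_some_one (some g)]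
    simp [eq_comm]
  · simp [proposal_eq_none_of_rem_eq_empty (daInit_rem_eq_empty h0 h1), h0, h1]

theorem daStep_daInit_hold_one {fp : Fin (m + 2) → FPref (n + 2)}
    (hacc : fp 1 none < fp 1 (some 1)) :
    (daStep (workerPrefs n m) fp (daInit (workerPrefs n m))).hold 1 = some 1 := by
  refine daStep_hold_eq_some (Or.inl ⟨proposal_daInit.mpr (by simp), hacc⟩) ?_
  rintro b (⟨hb, -⟩ | hb)
  · obtain ⟨-, h⟩ | ⟨rfl, -⟩ := proposal_daInit.mp hb
    · exact absurd h one_ne_zero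
    · rfl
  · cases hb

noncomputable section

def truthfulOutcome : DAState (n + 2) (m + 2) where
  rem := (daInit (workerPrefs n m)).rem
  hold := update (update (fun _ => none) 0 (some 0)) 1 (some 1)

theorem daStep_daInit_firmPrefs :
    daStep (workerPrefs n m) (firmPrefs n m) (daInit (workerPrefs n m)) = truthfulOutcome := by
  have hhold : (daStep (workerPrefs n m) (firmPrefs n m) (daInit (workerPrefs n m))).hold =
      truthfulOutcome.hold := by
    funext f
    rcases eq_or_ne f 0 with rfl | hf0
    · refine daStep_hold_eq_some
        (Or.inl ⟨proposal_daInit.mpr (by simp), by simpa using swapTopTwo_none_lt_some 0⟩) ?_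
      rintro b (⟨hb, -⟩ | hb)
      · obtain ⟨rfl, -⟩ | ⟨-, h⟩ := proposal_daInit.mp hb
        · rfl
        · exact absurd h zero_ne_one
      · cases hb
    rcases eq_or_ne f 1 with rfl | hf1
    · exact daStep_daInit_hold_one
        (by simpa [firmPrefs_of_ne_zero] using indexOrder_none_lt_some 1)
    · rw [daStep_hold_eq_self fun w hw => by simp_all [proposal_daInit]]
      simp [daInit, truthfulOutcome, hf0, hf1]
  refine DAState.ext (funext fun w => daStep_rem_eq_self fun f hf => ?_) hhold
  rw [hhold]
  obtain ⟨rfl, rfl⟩ | ⟨rfl, rfl⟩ := proposal_daInit.mp hf <;> simp [truthfulOutcome]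

theorem daStep_truthfulOutcome :
    daStep (workerPrefs n m) (firmPrefs n m) truthfulOutcome = truthfulOutcome := by
  refine daStep_eq_self fun w => ?_
  rcases eq_or_ne w 0 with rfl | h0
  · exact proposal_eq_none_of_hold_eq (f := 0) (by simp [truthfulOutcome])
  rcases eq_or_ne w 1 with rfl | h1
  · exact proposal_eq_none_of_hold_eq (f := 1) (by simp [truthfulOutcome])
  · exact proposal_eq_none_of_rem_eq_empty (daInit_rem_eq_empty h0 h1)

theorem daFinal_firmPrefs : daFinal (workerPrefs n m) (firmPrefs n m) = truthfulOutcome :=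
  daFinal_eq_of_daStep_eq_self (k := 1) (by omega) daStep_daInit_firmPrefs
    daStep_truthfulOutcome

def truncRound1 : DAState (n + 2) (m + 2) where
  rem := update (daInit (workerPrefs n m)).rem 0 (univ.erase 0)
  hold := update (fun _ => none) 1 (some 1)

/- Worker 1 is displaced from firm 1 without having proposed in this round, so firm 1 stays on
its list and it is rejected by firm 1 once more in the next round. -/
def truncRound2 : DAState (n + 2) (m + 2) where
  rem := truncRound1.rem
  hold := update (fun _ => none) 1 (some 0)

def truncRound3 : DAState (n + 2) (m + 2) where
  rem := update truncRound1.rem 1 (univ.erase 1)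
  hold := truncRound2.hold

def truncOutcome : DAState (n + 2) (m + 2) where
  rem := truncRound3.rem
  hold := update truncRound2.hold 0 (some 1)

theorem proposal_truncRound1 {w : Fin (n + 2)} {f : Fin (m + 2)} :
    proposal (workerPrefs n m) truncRound1 w = some f ↔ w = 0 ∧ f = 1 := by
  rcases eq_or_ne w 0 with rfl | h0
  · rw [proposal_eq_some_of_le (f := 1) (fun g => by simp [truncRound1, update_apply])
      (by simp [truncRound1]) fun g hg => by
        simpa [truncRound1, indexOrder_some_le_some] using Fin.one_le_of_ne_zero
          (by simpa [truncRound1] using hg)]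
    simp [eq_comm]
  rcases eq_or_ne w 1 with rfl | h1
  · rw [proposal_eq_none_of_hold_eq (s := truncRound1) (f := 1) (by simp [truncRound1])]
    simp
  · rw [proposal_eq_none_of_rem_eq_empty (s := truncRound1)
      (by simp [truncRound1, h0, daInit_rem_eq_empty h0 h1])]
    simp [h0]

theorem proposal_truncRound2 {w : Fin (n + 2)} {f : Fin (m + 2)} :
    proposal (workerPrefs n m) truncRound2 w = some f ↔ w = 1 ∧ f = 1 := by
  rcases eq_or_ne w 1 with rfl | h1
  · rw [proposal_eq_some_of_le (f := 1) (fun g => by simp [truncRound2, update_apply])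
      (by simp [truncRound2, truncRound1, daInit_rem_eq_univ]) fun g _ => by
        simpa using swapTopTwo_le_some_one (some g)]
    simp [eq_comm]
  rcases eq_or_ne w 0 with rfl | h0
  · rw [proposal_eq_none_of_hold_eq (s := truncRound2) (f := 1) (by simp [truncRound2])]
    simp
  · rw [proposal_eq_none_of_rem_eq_empty (s := truncRound2)
      (by simp [truncRound2, truncRound1, h0, daInit_rem_eq_empty h0 h1])]
    simp [h1]

theorem proposal_truncRound3 {w : Fin (n + 2)} {f : Fin (m + 2)} :
    proposal (workerPrefs n m) truncRound3 w = some f ↔ w = 1 ∧ f = 0 := by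
  rcases eq_or_ne w 1 with rfl | h1
  · rw [proposal_eq_some_of_le (f := 0) (fun g => by simp [truncRound3, truncRound2, update_apply])
      (by simp [truncRound3]) fun g hg => by
        simpa using swapTopTwo_some_le_some_zero (k := m) (i := g)
          (by simpa [truncRound3] using hg)]
    simp [eq_comm]
  rcases eq_or_ne w 0 with rfl | h0
  · rw [proposal_eq_none_of_hold_eq (s := truncRound3) (f := 1)
      (by simp [truncRound3, truncRound2])]
    simp
  · rw [proposal_eq_none_of_rem_eq_empty (s := truncRound3)
      (by simp [truncRound3, truncRound1, h0, h1, daInit_rem_eq_empty h0 h1])]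
    simp [h1]

theorem daStep_daInit_truncatedPref :
    daStep (workerPrefs n m) (update (firmPrefs n m) 0 (truncatedPref n))
      (daInit (workerPrefs n m)) = truncRound1 := by
  have hhold : (daStep (workerPrefs n m) (update (firmPrefs n m) 0 (truncatedPref n))
      (daInit (workerPrefs n m))).hold = truncRound1.hold := by
    funext f
    rcases eq_or_ne f 1 with rfl | hf1
    · refine daStep_daInit_hold_one ?_
      simpa [firmPrefs_of_ne_zero] using indexOrder_none_lt_some 1
    · rw [daStep_hold_eq_self fun w hw => ?_]
      · simp [daInit, truncRound1, hf1]
      obtain ⟨rfl, rfl⟩ | ⟨-, rfl⟩ := proposal_daInit.mp hw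
      · simpa using truncatedPref_some_zero_le_none
      · exact absurd rfl hf1
  refine DAState.ext (funext fun w => ?_) hhold
  rcases eq_or_ne w 0 with rfl | h0
  · rw [daStep_rem_eq_erase (f := 0) (proposal_daInit.mpr (by simp))
      (by simp [hhold, truncRound1])]
    simp [truncRound1, daInit_rem_eq_univ]
  · rw [daStep_rem_eq_self fun f hf => ?_]
    · simp [truncRound1, h0]
    obtain ⟨rfl, -⟩ | ⟨rfl, rfl⟩ := proposal_daInit.mp hf
    · exact absurd rfl h0
    · simp [hhold, truncRound1]

theorem daStep_truncRound1 :
    daStep (workerPrefs n m) (update (firmPrefs n m) 0 (truncatedPref n)) truncRound1 =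
      truncRound2 := by
  have hhold : (daStep (workerPrefs n m) (update (firmPrefs n m) 0 (truncatedPref n))
      truncRound1).hold = truncRound2.hold := by
    funext f
    rcases eq_or_ne f 1 with rfl | hf1
    · refine daStep_hold_eq_some (a := 0) (Or.inl ⟨proposal_truncRound1.mpr ⟨rfl, rfl⟩, by
        simpa [firmPrefs_of_ne_zero] using indexOrder_none_lt_some 0⟩) ?_
      rintro b (⟨hb, -⟩ | hb)
      · rw [(proposal_truncRound1.mp hb).1]
      · obtain rfl : b = 1 := by simpa [truncRound1] using hb.symm
        simp [firmPrefs_of_ne_zero, indexOrder_some_le_some]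
    · rw [daStep_hold_eq_self fun w hw => absurd (proposal_truncRound1.mp hw).2 hf1]
      simp [truncRound1, truncRound2, hf1]
  refine DAState.ext (funext fun w => daStep_rem_eq_self fun f hf => ?_) hhold
  obtain ⟨rfl, rfl⟩ := proposal_truncRound1.mp hf
  simp [hhold, truncRound2]

theorem daStep_truncRound2 :
    daStep (workerPrefs n m) (update (firmPrefs n m) 0 (truncatedPref n)) truncRound2 =
      truncRound3 := by
  have hhold : (daStep (workerPrefs n m) (update (firmPrefs n m) 0 (truncatedPref n))
      truncRound2).hold = truncRound3.hold := by
    funext f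
    rcases eq_or_ne f 1 with rfl | hf1
    · refine daStep_hold_eq_some (a := 0) (Or.inr (by simp [truncRound2])) ?_
      rintro b (⟨hb, -⟩ | hb)
      · rw [(proposal_truncRound2.mp hb).1]
        simp [firmPrefs_of_ne_zero, indexOrder_some_le_some]
      · obtain rfl : b = 0 := by simpa [truncRound2] using hb.symm
        rfl
    · rw [daStep_hold_eq_self fun w hw => absurd (proposal_truncRound2.mp hw).2 hf1]
      rfl
  refine DAState.ext (funext fun w => ?_) hhold
  rcases eq_or_ne w 1 with rfl | h1
  · rw [daStep_rem_eq_erase (f := 1) (proposal_truncRound2.mpr ⟨rfl, rfl⟩)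
      (by rw [hhold]; simp [truncRound3, truncRound2])]
    simp [truncRound3, truncRound2, truncRound1, daInit_rem_eq_univ]
  · rw [daStep_rem_eq_self fun f hf => absurd (proposal_truncRound2.mp hf).1 h1]
    simp [truncRound3, truncRound2, h1]

theorem daStep_truncRound3 :
    daStep (workerPrefs n m) (update (firmPrefs n m) 0 (truncatedPref n)) truncRound3 =
      truncOutcome := by
  have hhold : (daStep (workerPrefs n m) (update (firmPrefs n m) 0 (truncatedPref n))
      truncRound3).hold = truncOutcome.hold := by
    funext f
    rcases eq_or_ne f 0 with rfl | hf0
    · refine daStep_hold_eq_some (a := 1) (Or.inl ⟨proposal_truncRound3.mpr ⟨rfl, rfl⟩, by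
        simpa using truncatedPref_none_lt_some_one⟩) ?_
      rintro b (⟨hb, -⟩ | hb)
      · rw [(proposal_truncRound3.mp hb).1]
      · simp [truncRound3, truncRound2] at hb
    · rw [daStep_hold_eq_self fun w hw => absurd (proposal_truncRound3.mp hw).2 hf0]
      simp [truncOutcome, truncRound3, hf0]
  refine DAState.ext (funext fun w => daStep_rem_eq_self fun f hf => ?_) hhold
  obtain ⟨rfl, rfl⟩ := proposal_truncRound3.mp hf
  simp [hhold, truncOutcome]

theorem daStep_truncOutcome :
    daStep (workerPrefs n m) (update (firmPrefs n m) 0 (truncatedPref n)) truncOutcome =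
      truncOutcome := by
  refine daStep_eq_self fun w => ?_
  rcases eq_or_ne w 0 with rfl | h0
  · exact proposal_eq_none_of_hold_eq (f := 1) (by simp [truncOutcome, truncRound2])
  rcases eq_or_ne w 1 with rfl | h1
  · exact proposal_eq_none_of_hold_eq (f := 0) (by simp [truncOutcome])
  · exact proposal_eq_none_of_rem_eq_empty
      (by simp [truncOutcome, truncRound3, truncRound1, h0, h1, daInit_rem_eq_empty h0 h1])

theorem daFinal_truncatedPref :
    daFinal (workerPrefs n m) (update (firmPrefs n m) 0 (truncatedPref n)) = truncOutcome := by
  refine daFinal_eq_of_daStep_eq_self (k := 4) (by nlinarith) ?_ daStep_truncOutcome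
  rw [daRun_succ, daRun_succ, daRun_succ, daRun_succ,
    show daRun _ _ 0 = daInit (workerPrefs n m) from rfl, daStep_daInit_truncatedPref,
    daStep_truncRound1, daStep_truncRound2, daStep_truncRound3]

end

end DATruncation

/-- For markets with at least two workers and two firms, worker-proposing deferred
acceptance is not strategy-proof: there is a preference profile and a firm `f` with a
misreport such that `f` is matched, under the misreport profile, to a worker it strictly
prefers (under its true preference) to its partner under truthful reporting. -/
theorem da_not_strategyproof (n m : ℕ) (hn : 2 ≤ n) (hm : 2 ≤ m) :
    ∃ (pw : Fin n → WPref m) (fp : Fin m → FPref n) (f : Fin m) (e' : FPref n),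
      fp f ((daFinal pw (Function.update fp f e')).hold f) >
        fp f ((daFinal pw fp).hold f) := by
  obtain ⟨n, rfl⟩ := Nat.exists_eq_add_of_le' hn
  obtain ⟨m, rfl⟩ := Nat.exists_eq_add_of_le' hm
  open DATruncation in
  exact ⟨workerPrefs n m, firmPrefs n m, 0, truncatedPref n, by
    rw [daFinal_truncatedPref, daFinal_firmPrefs]
    simpa [truncOutcome, truthfulOutcome] using swapTopTwo_some_zero_lt_some_one⟩
end

section
/- There is no two-sided matching mechanism, for markets with at least two workers and two firms, that is both stable (outputs a stable matching for every preference profile) and strategy-proof (no agent can ever strictly improve its match by misreporting). -/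
/-- The partner of worker `w` in a matching described by firm-side assignments. -/
noncomputable def wMatch {n m : ℕ} (A : Fin m → Option (Fin n)) (w : Fin n) :
    Option (Fin m) :=
  if h : ∃ f, A f = some w then some h.choose else none

open Function

section Ranking

variable {α β : Type*} [Fintype α] {k : ℕ}

noncomputable def equivFinOfKey [LinearOrder β] (key : α → β) (hkey : Injective key)
    (hk : Fintype.card α = k) : α ≃ Fin k :=
  letI := LinearOrder.lift' key hkey
  (Fintype.orderIsoFinOfCardEq α hk).symm.toEquiv

theorem equivFinOfKey_lt_iff [LinearOrder β] {key : α → β} {hkey : Injective key}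
    {hk : Fintype.card α = k} {a b : α} :
    equivFinOfKey key hkey hk a < equivFinOfKey key hkey hk b ↔ key a < key b :=
  letI := LinearOrder.lift' key hkey
  (Fintype.orderIsoFinOfCardEq α hk).symm.lt_iff_lt

variable [BEq α]

/-- Ranks the entries of `l` on top, earlier entries higher, and all other elements below them in
an arbitrary order. -/
noncomputable def prefOfList (hk : Fintype.card α = k) (l : List α) : α ≃ Fin k :=
  equivFinOfKey (fun a => toLex (l.length - l.idxOf a, Fintype.equivFin α a))
    (fun _ _ h => (Fintype.equivFin α).injective (congrArg Prod.snd (toLex.injective h))) hk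

theorem prefOfList_lt_of_idxOf_lt [LawfulBEq α] {hk : Fintype.card α = k} {l : List α}
    {a b : α} (h : l.idxOf a < l.idxOf b) : prefOfList hk l b < prefOfList hk l a := by
  have hb : l.idxOf b ≤ l.length := List.idxOf_le_length
  exact equivFinOfKey_lt_iff.mpr (Prod.Lex.toLex_lt_toLex.mpr (Or.inl (by omega)))

end Ranking

noncomputable def listPref {k : ℕ} (l : List (Option (Fin k))) : Option (Fin k) ≃ Fin (k + 1) :=
  prefOfList (by simp) l

theorem listPref_lt_of_idxOf_lt {k : ℕ} {l : List (Option (Fin k))} {a b : Option (Fin k)}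
    (h : l.idxOf a < l.idxOf b) : listPref l b < listPref l a :=
  prefOfList_lt_of_idxOf_lt h

theorem listPref_lt_head {k : ℕ} {l : List (Option (Fin k))} {a b : Option (Fin k)}
    (h : b ≠ a) : listPref (a :: l) b < listPref (a :: l) a :=
  listPref_lt_of_idxOf_lt (by simp [List.idxOf_cons_ne _ h.symm])

theorem listPref_lt_second {k : ℕ} {l : List (Option (Fin k))} {a b c : Option (Fin k)}
    (hb : b ≠ a) (hc : c ≠ a) (hcb : c ≠ b) :
    listPref (a :: b :: l) c < listPref (a :: b :: l) b :=
  listPref_lt_of_idxOf_lt (by simp [List.idxOf_cons_ne _ hb.symm, List.idxOf_cons_ne _ hc.symm,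
    List.idxOf_cons_ne _ hcb.symm])

theorem wMatch_eq_none_iff {n m : ℕ} {A : Fin m → Option (Fin n)} {w : Fin n} :
    wMatch A w = none ↔ ∀ f, A f ≠ some w := by
  unfold wMatch
  split_ifs with h <;> simpa using h

theorem eq_some_of_wMatch_eq_some {n m : ℕ} {A : Fin m → Option (Fin n)} {w : Fin n} {f : Fin m}
    (h : wMatch A w = some f) : A f = some w := by
  unfold wMatch at h
  split_ifs at h with hex
  exact Option.some_injective _ h ▸ hex.choose_spec

theorem wMatch_ne_some {n m : ℕ} {A : Fin m → Option (Fin n)} {w : Fin n} {f : Fin m}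
    (h : A f ≠ some w) : wMatch A w ≠ some f :=
  mt eq_some_of_wMatch_eq_some h

theorem wMatch_eq_some_iff {n m : ℕ} {A : Fin m → Option (Fin n)} {w : Fin n} {f : Fin m}
    (hA : ∀ f f' w, A f = some w → A f' = some w → f = f') :
    wMatch A w = some f ↔ A f = some w := by
  refine ⟨eq_some_of_wMatch_eq_some, fun hf => ?_⟩
  have hex : ∃ f, A f = some w := ⟨f, hf⟩
  rw [wMatch, dif_pos hex, hA _ _ _ hex.choose_spec hf]

section Stability

variable {n m : ℕ} {pw : Fin n → WPref m} {fp : Fin m → FPref n} {A : Fin m → Option (Fin n)}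

structure IsStableMatching (pw : Fin n → WPref m) (fp : Fin m → FPref n)
    (A : Fin m → Option (Fin n)) : Prop where
  injective : ∀ f f' w, A f = some w → A f' = some w → f = f'
  individually_rational : ∀ w f, A f = some w →
    pw w none < pw w (some f) ∧ fp f none < fp f (some w)
  not_exists_blocking_pair : ¬ ∃ w f, pw w none < pw w (some f) ∧ fp f none < fp f (some w) ∧
    (∀ f', A f' = some w → pw w (some f') < pw w (some f)) ∧
    (∀ w', A f = some w' → fp f (some w') < fp f (some w))

namespace IsStableMatching

variable (hA : IsStableMatching pw fp A)
include hA

theorem worker_accepts {w : Fin n} {f : Fin m} (h : A f = some w) : pw w none < pw w (some f) :=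
  (hA.individually_rational w f h).1

theorem firm_accepts {w : Fin n} {f : Fin m} (h : A f = some w) : fp f none < fp f (some w) :=
  (hA.individually_rational w f h).2

theorem not_blocking {w : Fin n} {f : Fin m} (hw : pw w (wMatch A w) < pw w (some f))
    (hf : fp f (A f) < fp f (some w)) : False := by
  have hw_none : pw w none < pw w (some f) := by
    cases h : wMatch A w with
    | none => rwa [h] at hw
    | some f' =>
      exact (hA.worker_accepts ((wMatch_eq_some_iff hA.injective).1 h)).trans (h ▸ hw)
  have hf_none : fp f none < fp f (some w) := by
    cases h : A f with
    | none => rwa [h] at hf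
    | some w' => exact (hA.firm_accepts h).trans (h ▸ hf)
  refine hA.not_exists_blocking_pair ⟨w, f, hw_none, hf_none, fun f' h => ?_, fun w' h => ?_⟩
  · rwa [← (wMatch_eq_some_iff hA.injective).2 h]
  · rwa [← h]

end IsStableMatching

end Stability

def rothLists {ι κ : Type*} [DecidableEq ι] (a0 a1 : ι) (b0 b1 : κ) (a : ι) : List (Option κ) :=
  if a = a0 then [some b0, some b1, none] else if a = a1 then [some b1, some b0, none] else [none]

section Roth

variable {ι κ : Type*} [DecidableEq ι] {a0 a1 a : ι} {b0 b1 : κ}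

theorem rothLists_left : rothLists a0 a1 b0 b1 a0 = [some b0, some b1, none] := if_pos rfl

theorem rothLists_right (h : a0 ≠ a1) :
    rothLists a0 a1 b0 b1 a1 = [some b1, some b0, none] := by
  simp [rothLists, h.symm]

theorem rothLists_of_ne (h0 : a ≠ a0) (h1 : a ≠ a1) : rothLists a0 a1 b0 b1 a = [none] := by
  simp [rothLists, h0, h1]

end Roth

section RothMarket

variable {n m : ℕ} {w0 w1 : Fin n} {f0 f1 : Fin m} {A : Fin m → Option (Fin n)}

theorem IsStableMatching.eq_or_eq_of_eq_some {LW : Fin n → List (Option (Fin m))}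
    {LF : Fin m → List (Option (Fin n))}
    (hA : IsStableMatching (listPref ∘ LW) (listPref ∘ LF) A)
    (hLW : ∀ w, w ≠ w0 → w ≠ w1 → LW w = [none]) (hLF : ∀ f, f ≠ f0 → f ≠ f1 → LF f = [none])
    ⦃w : Fin n⦄ ⦃f : Fin m⦄ (h : A f = some w) : (w = w0 ∨ w = w1) ∧ (f = f0 ∨ f = f1) := by
  constructor
  · by_contra! hw
    have := hA.worker_accepts h
    simp only [comp_apply, hLW w hw.1 hw.2] at this
    exact this.not_gt (listPref_lt_head (Option.some_ne_none f))
  · by_contra! hf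
    have := hA.firm_accepts h
    simp only [comp_apply, hLF f hf.1 hf.2] at this
    exact this.not_gt (listPref_lt_head (Option.some_ne_none w))

variable (hw : w0 ≠ w1) (hf : f0 ≠ f1)
include hw hf

theorem IsStableMatching.roth_cases
    (hA : IsStableMatching (listPref ∘ rothLists w0 w1 f0 f1)
      (listPref ∘ rothLists f0 f1 w1 w0) A) :
    (A f0 = some w0 ∧ A f1 = some w1) ∨ (A f0 = some w1 ∧ A f1 = some w0) := by
  have hmem := hA.eq_or_eq_of_eq_some (fun _ => rothLists_of_ne) (fun _ => rothLists_of_ne)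
  have h0 : A f0 ≠ none := fun h0 => hA.not_blocking (w := w0) (f := f0)
    (by rw [comp_apply, rothLists_left]; exact listPref_lt_head (wMatch_ne_some (by simp [h0])))
    (by rw [comp_apply, rothLists_left, h0]
        exact listPref_lt_second (by simpa using hw) (by simp) (by simp))
  have h1 : A f1 ≠ none := fun h1 => hA.not_blocking (w := w1) (f := f1)
    (by rw [comp_apply, rothLists_right hw]; exact listPref_lt_head (wMatch_ne_some (by simp [h1])))
    (by rw [comp_apply, rothLists_right hf, h1]
        exact listPref_lt_second (by simpa using hw.symm) (by simp) (by simp))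
  obtain ⟨x0, hx0⟩ := Option.ne_none_iff_exists'.mp h0
  obtain ⟨x1, hx1⟩ := Option.ne_none_iff_exists'.mp h1
  rcases (hmem hx0).1 with rfl | rfl <;> rcases (hmem hx1).1 with rfl | rfl
  · exact absurd (hA.injective _ _ _ hx0 hx1) hf
  · exact Or.inl ⟨hx0, hx1⟩
  · exact Or.inr ⟨hx0, hx1⟩
  · exact absurd (hA.injective _ _ _ hx0 hx1) hf

theorem IsStableMatching.roth_firm_truncation
    (hA : IsStableMatching (listPref ∘ rothLists w0 w1 f0 f1)
      (listPref ∘ update (rothLists f0 f1 w1 w0) f0 [some w1, none]) A) : A f0 = some w1 := by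
  have hmem := hA.eq_or_eq_of_eq_some (fun _ => rothLists_of_ne)
    (fun _ h0 h1 => by rw [update_of_ne h0, rothLists_of_ne h0 h1])
  have hrej : A f0 ≠ some w0 := fun h => (hA.firm_accepts h).not_gt <| by
    rw [comp_apply, update_self]
    exact listPref_lt_second (by simp) (by simpa using hw) (by simp)
  by_contra h0
  have hf0 : A f0 = none := Option.eq_none_iff_forall_ne_some.2 fun x hx => by
    rcases (hmem hx).1 with rfl | rfl <;> contradiction
  by_cases h1 : A f1 = some w1
  · have hw0 : wMatch A w0 = none := wMatch_eq_none_iff.2 fun f hf' => by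
      rcases (hmem hf').2 with rfl | rfl
      · exact hrej hf'
      · exact hw (Option.some_injective _ (hf'.symm.trans h1))
    refine hA.not_blocking (w := w0) (f := f1) ?_ ?_
    · rw [comp_apply, rothLists_left, hw0]
      exact listPref_lt_second (by simpa using hf.symm) (by simp) (by simp)
    · rw [comp_apply, update_of_ne hf.symm, rothLists_right hf, h1]
      exact listPref_lt_head (by simpa using hw.symm)
  · have hw1 : wMatch A w1 = none := wMatch_eq_none_iff.2 fun f hf' => by
      rcases (hmem hf').2 with rfl | rfl <;> contradiction
    refine hA.not_blocking (w := w1) (f := f0) ?_ ?_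
    · rw [comp_apply, rothLists_right hw, hw1]
      exact listPref_lt_second (by simpa using hf) (by simp) (by simp)
    · rw [comp_apply, update_self, hf0]; exact listPref_lt_head (by simp)

theorem IsStableMatching.roth_worker_truncation
    (hA : IsStableMatching (listPref ∘ update (rothLists w0 w1 f0 f1) w0 [some f0, none])
      (listPref ∘ rothLists f0 f1 w1 w0) A) : A f0 = some w0 := by
  have hmem := hA.eq_or_eq_of_eq_some
    (fun _ h0 h1 => by rw [update_of_ne h0, rothLists_of_ne h0 h1]) (fun _ => rothLists_of_ne)
  have hrej : A f1 ≠ some w0 := fun h => (hA.worker_accepts h).not_gt <| by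
    rw [comp_apply, update_self]
    exact listPref_lt_second (by simp) (by simpa using hf.symm) (by simp)
  by_contra h0
  have hw0 : wMatch A w0 = none := wMatch_eq_none_iff.2 fun f hf' => by
    rcases (hmem hf').2 with rfl | rfl <;> contradiction
  by_cases h01 : A f0 = some w1
  · have hf1 : A f1 = none := Option.eq_none_iff_forall_ne_some.2 fun x hx => by
      rcases (hmem hx).1 with rfl | rfl
      · exact hrej hx
      · exact hf (hA.injective _ _ _ h01 hx)
    refine hA.not_blocking (w := w1) (f := f1) ?_ ?_
    · rw [comp_apply, update_of_ne hw.symm, rothLists_right hw,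
        (wMatch_eq_some_iff hA.injective).2 h01]
      exact listPref_lt_head (by simpa using hf)
    · rw [comp_apply, rothLists_right hf, hf1]
      exact listPref_lt_second (by simpa using hw.symm) (by simp) (by simp)
  · have hf0 : A f0 = none := Option.eq_none_iff_forall_ne_some.2 fun x hx => by
      rcases (hmem hx).1 with rfl | rfl <;> contradiction
    refine hA.not_blocking (w := w0) (f := f0) ?_ ?_
    · rw [comp_apply, update_self, hw0]; exact listPref_lt_head (by simp)
    · rw [comp_apply, rothLists_left, hf0]
      exact listPref_lt_second (by simpa using hw) (by simp) (by simp)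

end RothMarket

/-- Dubins–Freedman/Roth impossibility: for markets with at least two workers and two
firms, there is no deterministic matching mechanism that is both stable (individually
rational and with no blocking pair at every profile) and strategy-proof (no worker or
firm can ever strictly improve its match, w.r.t. its true preferences, by misreporting). -/
theorem no_stable_and_strategyproof_mechanism (n m : ℕ) (hn : 2 ≤ n) (hm : 2 ≤ m) :
    ¬ ∃ M : (Fin n → WPref m) → (Fin m → FPref n) → (Fin m → Option (Fin n)),
      -- `M` outputs a matching: each worker is matched to at most one firm
      (∀ pw fp f f' w, M pw fp f = some w → M pw fp f' = some w → f = f') ∧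
      -- stability: individual rationality
      (∀ pw fp w f, M pw fp f = some w →
        pw w (some f) > pw w none ∧ fp f (some w) > fp f none) ∧
      -- stability: no blocking pair
      (∀ pw fp, ¬ ∃ w f,
        pw w (some f) > pw w none ∧ fp f (some w) > fp f none ∧
        (∀ f', M pw fp f' = some w → pw w (some f) > pw w (some f')) ∧
        (∀ w', M pw fp f = some w' → fp f (some w) > fp f (some w'))) ∧
      -- strategy-proofness for firms
      (∀ (pw : Fin n → WPref m) (fp : Fin m → FPref n) (f : Fin m) (e' : FPref n),
        fp f (M pw fp f) ≥ fp f (M pw (Function.update fp f e') f)) ∧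
      -- strategy-proofness for workers
      (∀ (pw : Fin n → WPref m) (fp : Fin m → FPref n) (w : Fin n) (e' : WPref m),
        pw w (wMatch (M pw fp) w) ≥ pw w (wMatch (M (Function.update pw w e') fp) w)) := by
  rintro ⟨M, hinj, hIR, hNB, hspF, hspW⟩
  have stable pw fp : IsStableMatching pw fp (M pw fp) := ⟨hinj pw fp, hIR pw fp, hNB pw fp⟩
  let w0 : Fin n := ⟨0, by omega⟩
  let w1 : Fin n := ⟨1, by omega⟩
  let f0 : Fin m := ⟨0, by omega⟩
  let f1 : Fin m := ⟨1, by omega⟩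
  have hw : w0 ≠ w1 := by simp [w0, w1, Fin.ext_iff]
  have hf : f0 ≠ f1 := by simp [f0, f1, Fin.ext_iff]
  let P := listPref ∘ rothLists w0 w1 f0 f1
  let F := listPref ∘ rothLists f0 f1 w1 w0
  rcases (stable P F).roth_cases hw hf with ⟨h0, -⟩ | ⟨-, h1⟩
  · have hlie : M P (update F f0 (listPref [some w1, none])) f0 = some w1 := by
      refine IsStableMatching.roth_firm_truncation hw hf ?_
      rw [← comp_update]
      exact stable _ _
    have := hspF P F f0 (listPref [some w1, none])
    rw [h0, hlie] at this
    exact this.not_gt (listPref_lt_head (by simpa using hw))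
  · have hlie : wMatch (M (update P w0 (listPref [some f0, none])) F) w0 = some f0 := by
      refine (wMatch_eq_some_iff (hinj _ _)).2 (IsStableMatching.roth_worker_truncation hw hf ?_)
      rw [← comp_update]
      exact stable _ _
    have := hspW P F w0 (listPref [some f0, none])
    rw [(wMatch_eq_some_iff (hinj P F)).2 h1, hlie] at this
    exact this.not_gt (listPref_lt_head (by simpa using hf.symm))
end

section
/- The randomized serial dictatorship mechanism for two-sided matching is ordinally strategy-proof: for every agent i, every preference profile, every misreport by i, and every acceptable partner x of i, the probability (over the uniformly random priority order) that i is matched to a partner weakly preferred to x under truthful reporting is at least the corresponding probability under the misreport. -/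
attribute [local instance] Classical.propDecidable

/-- State of serial dictatorship: the (partial) matching, from both sides. -/
abbrev SDState (n m : ℕ) := (Fin n → Option (Fin m)) × (Fin m → Option (Fin n))

/-- Processing one agent in serial dictatorship: if the agent is not yet matched, it is
matched to its most preferred not-yet-matched acceptable partner on the other side
(or left unmatched if none is acceptable). -/
noncomputable def sdStep {n m : ℕ} (pw : Fin n → WPref m) (fp : Fin m → FPref n)
    (s : SDState n m) : (Fin n ⊕ Fin m) → SDState n m
  | Sum.inl w =>
    if s.1 w ≠ none then s
    else
      match (Finset.univ.filter fun f => s.2 f = none ∧ pw w (some f) > pw w none).toList.argmax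
          (fun f => pw w (some f)) with
      | none => s
      | some f => (Function.update s.1 w (some f), Function.update s.2 f (some w))
  | Sum.inr f =>
    if s.2 f ≠ none then s
    else
      match (Finset.univ.filter fun w => s.1 w = none ∧ fp f (some w) > fp f none).toList.argmax
          (fun w => fp f (some w)) with
      | none => s
      | some w => (Function.update s.1 w (some f), Function.update s.2 f (some w))

/-- Running serial dictatorship on a list of agents, starting from the empty matching. -/
noncomputable def sdRun {n m : ℕ} (pw : Fin n → WPref m) (fp : Fin m → FPref n)
    (L : List (Fin n ⊕ Fin m)) : SDState n m :=
  L.foldl (sdStep pw fp) (fun _ => none, fun _ => none)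

/-- The processing order induced by a permutation `π` of all agents. -/
noncomputable def sdOrder {n m : ℕ} (π : Equiv.Perm (Fin n ⊕ Fin m)) :
    List (Fin n ⊕ Fin m) :=
  (Finset.univ : Finset (Fin n ⊕ Fin m)).toList.map π

/-!
Fix a priority order and an agent `i`. Everything processed before `i`'s turn does not depend on
`i`'s report, and matches are never undone. So if `i` is already matched at its turn, its report
is irrelevant; otherwise, reporting truthfully it takes its truly best available acceptable
partner, whereas any partner it ends up with under a misreport was available at that turn.
Hence, for every acceptable `x`, the event "partner weakly preferred to `x`" under the misreport
is contained in the same event under truthful reporting, for each priority order separately.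
Firms are handled by exchanging the roles of the two sides (`sdRun_swap`).
-/

namespace SDState

variable {n m : ℕ}

def IsConsistent (s : SDState n m) : Prop :=
  ∀ (w : Fin n) (f : Fin m), s.1 w = some f ↔ s.2 f = some w

lemma isConsistent_empty : IsConsistent ((fun _ => none, fun _ => none) : SDState n m) := by
  simp [IsConsistent]

lemma IsConsistent.update {s : SDState n m} (hs : s.IsConsistent) {w : Fin n} {f : Fin m}
    (hw : s.1 w = none) (hf : s.2 f = none) :
    IsConsistent (Function.update s.1 w (some f), Function.update s.2 f (some w)) := by
  intro u g
  by_cases hu : u = w <;> by_cases hg : g = f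
  · simp [hu, hg]
  · simp [hu, Function.update_of_ne hg, Ne.symm hg, ← hs w g, hw]
  · simp [hg, Function.update_of_ne hu, Ne.symm hu, hs u f, hf]
  · simp [Function.update_of_ne hu, Function.update_of_ne hg, hs u g]

end SDState

section
variable {n m : ℕ} (pw : Fin n → WPref m) (fp : Fin m → FPref n)

lemma sdStep_swap (s : SDState n m) (a : Fin n ⊕ Fin m) :
    sdStep fp pw s.swap a.swap = (sdStep pw fp s a).swap := by
  cases a <;> simp only [sdStep, Sum.swap_inl, Sum.swap_inr, Prod.fst_swap, Prod.snd_swap] <;>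
    split_ifs <;> (try rfl) <;> split <;> split <;> simp_all

lemma sdRun_swap (L : List (Fin n ⊕ Fin m)) :
    sdRun fp pw (L.map Sum.swap) = (sdRun pw fp L).swap := by
  suffices ∀ s : SDState n m, (L.map Sum.swap).foldl (sdStep fp pw) s.swap =
      (L.foldl (sdStep pw fp) s).swap from this (fun _ => none, fun _ => none)
  induction L with
  | nil => intro s; rfl
  | cons a L ih => intro s; rw [List.map_cons, List.foldl_cons, List.foldl_cons, sdStep_swap, ih]

lemma sdStep_inl_eq_self_or_match (s : SDState n m) (w : Fin n) :
    sdStep pw fp s (Sum.inl w) = s ∨ ∃ f, s.1 w = none ∧ s.2 f = none ∧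
      sdStep pw fp s (Sum.inl w) =
        (Function.update s.1 w (some f), Function.update s.2 f (some w)) := by
  simp only [sdStep]
  split_ifs with hw
  · exact Or.inl rfl
  split
  next => exact Or.inl rfl
  next f hf =>
    have hmem := List.argmax_mem (Option.mem_def.2 hf)
    simp only [Finset.mem_toList, Finset.mem_filter] at hmem
    exact Or.inr ⟨f, not_not.1 hw, hmem.2.1, rfl⟩

lemma sdStep_eq_self_or_match (s : SDState n m) (a : Fin n ⊕ Fin m) :
    sdStep pw fp s a = s ∨ ∃ w f, s.1 w = none ∧ s.2 f = none ∧
      sdStep pw fp s a = (Function.update s.1 w (some f), Function.update s.2 f (some w)) := by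
  cases a with
  | inl w =>
    obtain h | ⟨f, h⟩ := sdStep_inl_eq_self_or_match pw fp s w
    exacts [Or.inl h, Or.inr ⟨w, f, h⟩]
  | inr f =>
    have hswap := sdStep_swap fp pw s.swap (Sum.inl f)
    simp only [Prod.swap_swap, Sum.swap_inl] at hswap
    obtain h | ⟨w, hf, hw, h⟩ := sdStep_inl_eq_self_or_match fp pw s.swap f
    · exact Or.inl (by rw [hswap, h, Prod.swap_swap])
    · exact Or.inr ⟨w, f, hw, hf, by rw [hswap, h]; rfl⟩

lemma sdStep_fst_of_eq_some {s : SDState n m} {w : Fin n} {f : Fin m} (h : s.1 w = some f)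
    (a : Fin n ⊕ Fin m) : (sdStep pw fp s a).1 w = some f := by
  obtain hs | ⟨u, g, hu, -, hs⟩ := sdStep_eq_self_or_match pw fp s a <;> rw [hs]
  · exact h
  · exact (Function.update_of_ne (by rintro rfl; simp [hu] at h) _ _).trans h

lemma foldl_sdStep_fst_of_eq_some {s : SDState n m} {w : Fin n} {f : Fin m} (h : s.1 w = some f)
    (L : List (Fin n ⊕ Fin m)) : (L.foldl (sdStep pw fp) s).1 w = some f := by
  induction L generalizing s with
  | nil => exact h
  | cons a L ih => exact ih (sdStep_fst_of_eq_some pw fp h a)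

lemma isConsistent_sdStep {s : SDState n m} (hs : s.IsConsistent)
    (a : Fin n ⊕ Fin m) : (sdStep pw fp s a).IsConsistent := by
  obtain h | ⟨w, f, hw, hf, h⟩ := sdStep_eq_self_or_match pw fp s a <;> rw [h]
  exacts [hs, hs.update hw hf]

lemma isConsistent_foldl_sdStep {s : SDState n m} (hs : s.IsConsistent)
    (L : List (Fin n ⊕ Fin m)) : (L.foldl (sdStep pw fp) s).IsConsistent := by
  induction L generalizing s with
  | nil => exact hs
  | cons a L ih => exact ih (isConsistent_sdStep pw fp hs a)

lemma foldl_sdStep_snd_eq_none {s : SDState n m} (hs : s.IsConsistent) {w : Fin n}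
    (hw : s.1 w = none) {L : List (Fin n ⊕ Fin m)} {f : Fin m}
    (hf : (L.foldl (sdStep pw fp) s).1 w = some f) : s.2 f = none := by
  by_contra hne
  obtain ⟨u, hu⟩ := Option.ne_none_iff_exists'.1 hne
  have hsu := (hs u f).2 hu
  have hcons := isConsistent_foldl_sdStep pw fp hs L
  have huw : u = w := Option.some.inj <|
    ((hcons u f).1 (foldl_sdStep_fst_of_eq_some pw fp hsu L)).symm.trans ((hcons w f).1 hf)
  simp [huw, hw] at hsu

lemma sdStep_update_of_ne (w : Fin n) (e : WPref m) (s : SDState n m) {a : Fin n ⊕ Fin m}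
    (ha : a ≠ Sum.inl w) : sdStep (Function.update pw w e) fp s a = sdStep pw fp s a := by
  cases a with
  | inl u => simp only [sdStep, Function.update_of_ne (fun h => ha (congrArg Sum.inl h))]
  | inr f => rfl

lemma foldl_sdStep_update_of_not_mem (w : Fin n) (e : WPref m) {L : List (Fin n ⊕ Fin m)}
    (hL : Sum.inl w ∉ L) (s : SDState n m) :
    L.foldl (sdStep (Function.update pw w e) fp) s = L.foldl (sdStep pw fp) s := by
  induction L generalizing s with
  | nil => rfl
  | cons a L ih =>
    rw [List.mem_cons, not_or] at hL
    rw [List.foldl_cons, List.foldl_cons, sdStep_update_of_ne pw fp w e s (Ne.symm hL.1), ih hL.2]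

lemma exists_sdStep_inl_fst_eq_of_available {s : SDState n m} {w : Fin n} (hw : s.1 w = none)
    {f : Fin m} (hf : s.2 f = none) (hacc : pw w none < pw w (some f)) :
    ∃ g, (sdStep pw fp s (Sum.inl w)).1 w = some g ∧ pw w (some f) ≤ pw w (some g) := by
  have hmem : f ∈ (Finset.univ.filter
      fun f => s.2 f = none ∧ pw w (some f) > pw w none).toList := by
    simpa using ⟨hf, hacc⟩
  obtain ⟨g, hg⟩ := Option.ne_none_iff_exists'.1 <|
    (List.argmax_eq_none (f := fun f => pw w (some f))).not.2 (List.ne_nil_of_mem hmem)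
  refine ⟨g, ?_, List.le_of_mem_argmax (f := fun f => pw w (some f)) hmem hg⟩
  simp [sdStep, hw, hg]

lemma le_sdRun_fst_of_update {L : List (Fin n ⊕ Fin m)} (hL : L.Nodup) (w : Fin n)
    (e : WPref m) {f : Fin m} (hacc : pw w none < pw w (some f))
    (hf : (sdRun (Function.update pw w e) fp L).1 w = some f) :
    pw w (some f) ≤ pw w ((sdRun pw fp L).1 w) := by
  by_cases hmem : Sum.inl w ∈ L
  case neg =>
    rw [sdRun, foldl_sdStep_update_of_not_mem pw fp w e hmem] at hf
    rw [sdRun, hf]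
  obtain ⟨L₁, L₂, rfl⟩ := List.append_of_mem hmem
  have hL₁ : Sum.inl w ∉ L₁ := fun h => List.disjoint_of_nodup_append hL h List.mem_cons_self
  simp only [sdRun, List.foldl_append, List.foldl_cons,
    foldl_sdStep_update_of_not_mem pw fp w e hL₁] at hf ⊢
  set s := L₁.foldl (sdStep pw fp) (fun _ => none, fun _ => none)
  have hs : s.IsConsistent := isConsistent_foldl_sdStep pw fp SDState.isConsistent_empty L₁
  cases hw : s.1 w with
  | some g =>
    rw [← List.foldl_cons, foldl_sdStep_fst_of_eq_some _ fp hw] at hf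
    rw [← List.foldl_cons, foldl_sdStep_fst_of_eq_some _ fp hw, ← Option.some.inj hf]
  | none =>
    rw [← List.foldl_cons] at hf
    obtain ⟨g, hg, hfg⟩ := exists_sdStep_inl_fst_eq_of_available pw fp hw
      (foldl_sdStep_snd_eq_none _ fp hs hw hf) hacc
    rwa [foldl_sdStep_fst_of_eq_some pw fp hg]

lemma sdRun_fst_ge_of_update {L : List (Fin n ⊕ Fin m)} (hL : L.Nodup) (w : Fin n)
    (e : WPref m) {x : Fin m} (hx : pw w none < pw w (some x))
    (h : pw w ((sdRun (Function.update pw w e) fp L).1 w) ≥ pw w (some x)) :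
    pw w ((sdRun pw fp L).1 w) ≥ pw w (some x) := by
  cases hf : (sdRun (Function.update pw w e) fp L).1 w with
  | none => rw [hf] at h; exact absurd hx h.not_gt
  | some f =>
    rw [hf] at h
    exact h.trans (le_sdRun_fst_of_update pw fp hL w e (hx.trans_le h) hf)

end

lemma sdOrder_nodup {n m : ℕ} (π : Equiv.Perm (Fin n ⊕ Fin m)) : (sdOrder π).Nodup :=
  (Finset.nodup_toList _).map π.injective

/-- Randomized serial dictatorship is ordinally strategy-proof: for every agent, every
misreport, and every acceptable partner `x`, the number of priority orders (uniformly
random permutations) under which the agent's truthful match is weakly preferred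
(under its true preference) to `x` is at least the corresponding number under the
misreport; i.e., the truthful match distribution first-order stochastically dominates
the misreport match distribution. -/
theorem rsd_ordinally_strategyproof (n m : ℕ) (pw : Fin n → WPref m) (fp : Fin m → FPref n) :
    (∀ (w : Fin n) (e' : WPref m) (x : Fin m), pw w (some x) > pw w none →
      Nat.card {π : Equiv.Perm (Fin n ⊕ Fin m) //
          pw w ((sdRun pw fp (sdOrder π)).1 w) ≥ pw w (some x)} ≥
        Nat.card {π : Equiv.Perm (Fin n ⊕ Fin m) //
          pw w ((sdRun (Function.update pw w e') fp (sdOrder π)).1 w) ≥ pw w (some x)}) ∧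
    (∀ (f : Fin m) (e' : FPref n) (x : Fin n), fp f (some x) > fp f none →
      Nat.card {π : Equiv.Perm (Fin n ⊕ Fin m) //
          fp f ((sdRun pw fp (sdOrder π)).2 f) ≥ fp f (some x)} ≥
        Nat.card {π : Equiv.Perm (Fin n ⊕ Fin m) //
          fp f ((sdRun pw (Function.update fp f e') (sdOrder π)).2 f) ≥ fp f (some x)}) := by
  constructor
  · intro w e' x hx
    exact Nat.card_le_card_of_injective _ (Subtype.impEmbedding _ _ fun π =>
      sdRun_fst_ge_of_update pw fp (sdOrder_nodup π) w e' hx).injective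
  · intro f e' x hx
    have hswap (fp' : Fin m → FPref n) (π : Equiv.Perm (Fin n ⊕ Fin m)) :
        (sdRun pw fp' (sdOrder π)).2 f = (sdRun fp' pw ((sdOrder π).map Sum.swap)).1 f := by
      rw [sdRun_swap]; rfl
    simp only [hswap]
    exact Nat.card_le_card_of_injective _ (Subtype.impEmbedding _ _ fun π =>
      sdRun_fst_ge_of_update fp pw ((sdOrder_nodup π).map Sum.swap_leftInverse.injective)
        f e' hx).injective
end

section
/- The randomized serial dictatorship mechanism for two-sided matching is not ex ante stable: there exists a preference profile (with 3 workers and 3 firms) and a worker-firm pair (w,f) that are each other's top choices, yet under RSD the probability that w is matched to f is strictly less than 1, so (w,f) is an ex ante blocking pair. -/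
attribute [local instance] Classical.propDecidable

/- Give every agent the same ranking: partner `1`, then `2`, then `0`, then the outside option.
Worker `1` and firm `1` are then each other's top choice. Under any priority order that lets
worker `0` move first, worker `0` takes firm `1`; serial dictatorship never undoes a match, so
worker `1` does not get firm `1` under that order, and the probability of the pair is below 1. -/

theorem List.argmax_eq_some_of_forall_lt {α β : Type*} [Preorder β] [DecidableLT β] {f : α → β}
    {l : List α} {a : α} (ha : a ∈ l) (h : ∀ b ∈ l, b ≠ a → f b < f a) :
    l.argmax f = some a := by
  obtain ⟨m, hm⟩ := Option.ne_none_iff_exists'.mp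
    (mt (List.argmax_eq_none (f := f)).mp (List.ne_nil_of_mem ha))
  rw [hm, Option.some_inj]
  by_contra hne
  exact List.not_lt_of_mem_argmax ha hm (h m (List.argmax_mem hm) hne)

section SerialDictatorship

variable {n m : ℕ} (pw : Fin n → WPref m) (fp : Fin m → FPref n)

theorem sdStep_eq_self_or_update (s : SDState n m) (a : Fin n ⊕ Fin m) :
    sdStep pw fp s a = s ∨ ∃ w f, s.2 f = none ∧
      sdStep pw fp s a = (Function.update s.1 w (some f), Function.update s.2 f (some w)) := by
  cases a with
  | inl w =>
    rw [sdStep]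
    split
    · exact Or.inl rfl
    split
    · exact Or.inl rfl
    next f hf =>
      have hmem := List.argmax_mem hf
      rw [Finset.mem_toList, Finset.mem_filter] at hmem
      exact Or.inr ⟨w, f, hmem.2.1, rfl⟩
  | inr f =>
    rw [sdStep]
    split
    · exact Or.inl rfl
    next hfree =>
      split
      · exact Or.inl rfl
      next w _ => exact Or.inr ⟨w, f, not_not.mp hfree, rfl⟩

theorem sdStep_preserves_match {s : SDState n m} {f : Fin m} {w₀ w : Fin n}
    (hf : s.2 f = some w₀) (hw : s.1 w ≠ some f) (a : Fin n ⊕ Fin m) :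
    (sdStep pw fp s a).2 f = some w₀ ∧ (sdStep pw fp s a).1 w ≠ some f := by
  rcases sdStep_eq_self_or_update pw fp s a with h | ⟨w', f', hf', h⟩
  · rw [h]
    exact ⟨hf, hw⟩
  have hne : f' ≠ f := by
    rintro rfl
    simp [hf] at hf'
  rw [h]
  refine ⟨by simpa [Function.update_of_ne hne.symm] using hf, ?_⟩
  rcases eq_or_ne w w' with rfl | hw'
  · simpa using hne
  · simpa [Function.update_of_ne hw'] using hw

theorem foldl_sdStep_preserves_match {f : Fin m} {w₀ w : Fin n} (L : List (Fin n ⊕ Fin m))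
    {s : SDState n m} (hf : s.2 f = some w₀) (hw : s.1 w ≠ some f) :
    (L.foldl (sdStep pw fp) s).2 f = some w₀ ∧ (L.foldl (sdStep pw fp) s).1 w ≠ some f := by
  induction L generalizing s with
  | nil => exact ⟨hf, hw⟩
  | cons a L ih =>
    obtain ⟨hf', hw'⟩ := sdStep_preserves_match pw fp hf hw a
    exact ih hf' hw'

theorem sdStep_inl_of_top {s : SDState n m} {w : Fin n} {f : Fin m}
    (hw : s.1 w = none) (hf : s.2 f = none) (htop : ∀ x, x ≠ some f → pw w (some f) > pw w x) :
    sdStep pw fp s (Sum.inl w) =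
      (Function.update s.1 w (some f), Function.update s.2 f (some w)) := by
  have hargmax : (Finset.univ.filter fun f' => s.2 f' = none ∧ pw w (some f') > pw w none
      ).toList.argmax (fun f' => pw w (some f')) = some f := by
    refine List.argmax_eq_some_of_forall_lt ?_ fun b _ hb => htop _ (by simpa using hb)
    simpa [hf] using htop none (by simp)
  simp only [sdStep, hw, ne_eq, not_true_eq_false, if_false, hargmax]

theorem exists_sdOrder_eq_cons (a : Fin n ⊕ Fin m) :
    ∃ (π : Equiv.Perm (Fin n ⊕ Fin m)) (L : List (Fin n ⊕ Fin m)), sdOrder π = a :: L := by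
  obtain ⟨b, L, hL⟩ :=
    List.exists_cons_of_ne_nil (Finset.univ_nonempty_iff.mpr ⟨a⟩).toList_ne_nil
  refine ⟨Equiv.swap b a, L.map (Equiv.swap b a), ?_⟩
  rw [sdOrder, hL, List.map_cons, Equiv.swap_apply_left]

end SerialDictatorship

def commonPref : Option (Fin 3) ≃ Fin 4 where
  toFun
    | none => 0
    | some 0 => 1
    | some 1 => 3
    | some 2 => 2
  invFun
    | 0 => none
    | 1 => some 0
    | 2 => some 2
    | 3 => some 1
  left_inv o := by fin_cases o <;> rfl
  right_inv i := by fin_cases i <;> rfl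

theorem commonPref_top :
    ∀ x : Option (Fin 3), x ≠ some 1 → commonPref (some 1) > commonPref x := by
  decide

/-- Randomized serial dictatorship is not ex ante stable: there is a 3-workers/3-firms
preference profile and a worker-firm pair `(w, f)` that are each other's top choices,
yet under RSD the probability (over the uniformly random priority order) that `w` is
matched to `f` is strictly less than 1; hence `(w, f)` is an ex ante blocking pair. -/
theorem rsd_not_ex_ante_stable :
    ∃ (pw : Fin 3 → WPref 3) (fp : Fin 3 → FPref 3) (w : Fin 3) (f : Fin 3),
      (∀ x : Option (Fin 3), x ≠ some f → pw w (some f) > pw w x) ∧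
      (∀ y : Option (Fin 3), y ≠ some w → fp f (some w) > fp f y) ∧
      Nat.card {π : Equiv.Perm (Fin 3 ⊕ Fin 3) //
          (sdRun pw fp (sdOrder π)).1 w = some f} <
        Nat.card (Equiv.Perm (Fin 3 ⊕ Fin 3)) := by
  refine ⟨fun _ => commonPref, fun _ => commonPref, 1, 1, commonPref_top, commonPref_top, ?_⟩
  obtain ⟨π, L, hπ⟩ := exists_sdOrder_eq_cons (n := 3) (m := 3) (Sum.inl 0)
  refine Finite.card_subtype_lt (x := π) ?_
  rw [sdRun, hπ, List.foldl_cons, sdStep_inl_of_top _ _ rfl rfl commonPref_top]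
  exact (foldl_sdStep_preserves_match _ _ L (w₀ := 0) (by simp) (by simp)).2
end
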